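/- (Generalized Parry theorem) Let β = (β_n) be a Cantor real base. A sequence a ∈ ℕ^ℕ is the greedy β-expansion of some x ∈ [0,1) if and only if for all n ∈ ℕ, σ^n(a) <_lex d*_{β^{(n)}}(1). -/

import Mathlib

open Filter

/-- Product of the first `n+1` terms of the base sequence. -/
noncomputable def cprod (β : ℕ → ℝ) (n : ℕ) : ℝ := ∏ i ∈ Finset.range (n+1), β i

/-- A Cantor real base: all terms exceed 1 and the partial products tend to infinity. -/
def IsCantorBase (β : ℕ → ℝ) : Prop :=
  (∀ n, 1 < β n) ∧ Tendsto (cprod β) atTop atTop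

/-- Value of a real-digit sequence in a Cantor base. -/
noncomputable def valB (β : ℕ → ℝ) (a : ℕ → ℝ) : ℝ := ∑' n, a n / cprod β n

/-- Value of a natural-digit sequence in a Cantor base. -/
noncomputable def valN (β : ℕ → ℝ) (a : ℕ → ℕ) : ℝ := valB β (fun n => (a n : ℝ))

/-- Remainders of the greedy algorithm. -/
noncomputable def greedyRem (β : ℕ → ℝ) (x : ℝ) : ℕ → ℝ
  | 0 => β 0 * x - ⌊β 0 * x⌋
  | n+1 => β (n+1) * greedyRem β x n - ⌊β (n+1) * greedyRem β x n⌋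

/-- Digits of the greedy expansion. -/
noncomputable def greedy (β : ℕ → ℝ) (x : ℝ) : ℕ → ℕ
  | 0 => (⌊β 0 * x⌋).toNat
  | n+1 => (⌊β (n+1) * greedyRem β x n⌋).toNat

/-- Remainders of the quasi-greedy algorithm started at `1`:
at each step the largest digit keeping the remainder strictly positive is chosen. -/
noncomputable def qRem (β : ℕ → ℝ) : ℕ → ℝ
  | 0 => β 0 - (⌈β 0⌉ - 1)
  | n+1 => β (n+1) * qRem β n - (⌈β (n+1) * qRem β n⌉ - 1)

/-- Digits of the quasi-greedy expansion of `1`. -/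
noncomputable def quasiGreedy (β : ℕ → ℝ) : ℕ → ℕ
  | 0 => (⌈β 0⌉ - 1).toNat
  | n+1 => (⌈β (n+1) * qRem β n⌉ - 1).toNat

/-- The `n`-shifted base `β^{(n)}`. -/
def shiftBase (β : ℕ → ℝ) (n : ℕ) : ℕ → ℝ := fun k => β (n + k)

/-- The `n`-fold shift `σ^n` of a digit sequence. -/
def shiftSeq (a : ℕ → ℕ) (n : ℕ) : ℕ → ℕ := fun k => a (n + k)

/-- Strict lexicographic order on digit sequences. -/
def LexLt (a b : ℕ → ℕ) : Prop := ∃ ℓ, (∀ k, k < ℓ → a k = b k) ∧ a ℓ < b ℓ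

/-- Lexicographic order on digit sequences. -/
def LexLe (a b : ℕ → ℕ) : Prop := LexLt a b ∨ a = b

/-- The set of greedy expansions of points of `[0,1)`. -/
def Dset (β : ℕ → ℝ) : Set (ℕ → ℕ) := {a | ∃ x ∈ Set.Ico (0:ℝ) 1, a = greedy β x}

/-!
Let `x_n = greedyOrbit β x n` be the orbit of `x` under the greedy algorithm (`x₀ = x`,
`x_{n+1} = β_n x_n - ⌊β_n x_n⌋`) and `q_n = quasiOrbit β n ∈ (0, 1]` the quasi-greedy orbit of `1`
(`q₀ = 1`, `q_{n+1} = β_n q_n - (⌈β_n q_n⌉ - 1)`). As long as the digits agree,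
`x_n - q_n = β_0 ⋯ β_{n-1} (x - 1) < 0`, so the next greedy digit `⌊β_n x_n⌋` is at most
`⌈β_n q_n⌉ - 1`; since the products diverge while `x_n - q_n ≥ -1`, the digits cannot agree
forever. This gives `d_β(x) <_lex d*_β(1)`, and applying it to `x_n` in the base `β^{(n)}` gives
the conditions on all shifts.

Conversely, if `a` satisfies the conditions, the partial sums of the value of every shift
`σ^m(a)` in the base `β^{(m)}` are at most `1`, by induction on the number of terms: up to the
first index `ℓ` where `σ^m(a)` falls below `d*_{β^{(m)}}(1)` they are dominated by the partial
sums of the quasi-greedy expansion, which add up to `1 - q_{ℓ+1} / (β_m ⋯ β_{m+ℓ})`, the digit at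
`ℓ` loses at least `1 / (β_m ⋯ β_{m+ℓ})`, and the remaining tail is worth at most that. Hence
every shift has a value `y_m ∈ [0, 1)`, these satisfy `β_m y_m = a_m + y_{m+1}`, and then the
greedy algorithm applied to `y_0` reproduces `a`.
-/

open Filter Finset

noncomputable def greedyOrbit (β : ℕ → ℝ) (x : ℝ) : ℕ → ℝ
  | 0 => x
  | n + 1 => greedyRem β x n

noncomputable def quasiOrbit (β : ℕ → ℝ) : ℕ → ℝ
  | 0 => 1
  | n + 1 => qRem β n

noncomputable def partialVal (β : ℕ → ℝ) (a : ℕ → ℕ) (M : ℕ) : ℝ :=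
  ∑ k ∈ range M, (a k : ℝ) / cprod β k

section Shifts

@[simp]
lemma shiftBase_zero (β : ℕ → ℝ) : shiftBase β 0 = β :=
  funext fun k => by simp [shiftBase]

@[simp]
lemma shiftSeq_zero (a : ℕ → ℕ) : shiftSeq a 0 = a :=
  funext fun k => by simp [shiftSeq]

lemma shiftBase_shiftBase (β : ℕ → ℝ) (m n : ℕ) :
    shiftBase (shiftBase β m) n = shiftBase β (m + n) :=
  funext fun k => by simp [shiftBase, add_assoc]

lemma shiftSeq_shiftSeq (a : ℕ → ℕ) (m n : ℕ) :
    shiftSeq (shiftSeq a m) n = shiftSeq a (m + n) :=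
  funext fun k => by simp [shiftSeq, add_assoc]

lemma cprod_add (β : ℕ → ℝ) (j k : ℕ) :
    cprod β (j + k) = (∏ i ∈ range j, β i) * cprod (shiftBase β j) k := by
  rw [cprod, add_assoc, prod_range_add]
  rfl

lemma cprod_pos {β : ℕ → ℝ} (hβ : ∀ n, 0 < β n) (n : ℕ) : 0 < cprod β n :=
  prod_pos fun i _ => hβ i

lemma IsCantorBase.shift {β : ℕ → ℝ} (hβ : IsCantorBase β) (m : ℕ) :
    IsCantorBase (shiftBase β m) := by
  refine ⟨fun n => hβ.1 (m + n), ?_⟩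
  have hP : 0 < ∏ i ∈ range m, β i := prod_pos fun i _ => one_pos.trans (hβ.1 i)
  refine (((tendsto_add_atTop_iff_nat m).2 hβ.2).atTop_div_const hP).congr fun k => ?_
  rw [add_comm, cprod_add]
  field_simp

end Shifts

section Greedy

variable {β : ℕ → ℝ} {x : ℝ}

lemma greedy_eq_floor (n : ℕ) : greedy β x n = ⌊β n * greedyOrbit β x n⌋.toNat := by
  cases n <;> rfl

lemma greedyOrbit_succ (n : ℕ) :
    greedyOrbit β x (n + 1) = Int.fract (β n * greedyOrbit β x n) := by
  cases n <;> rfl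

lemma greedyOrbit_succ_mem_Ico (n : ℕ) : greedyOrbit β x (n + 1) ∈ Set.Ico 0 1 :=
  greedyOrbit_succ (β := β) n ▸ ⟨Int.fract_nonneg _, Int.fract_lt_one _⟩

lemma greedyOrbit_nonneg (hx : 0 ≤ x) (n : ℕ) : 0 ≤ greedyOrbit β x n := by
  cases n with
  | zero => exact hx
  | succ n => exact greedyOrbit_succ_mem_Ico n |>.1

lemma greedyOrbit_mem_Ico (hx : x ∈ Set.Ico 0 1) (n : ℕ) : greedyOrbit β x n ∈ Set.Ico 0 1 := by
  cases n with
  | zero => exact hx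
  | succ n => exact greedyOrbit_succ_mem_Ico n

lemma greedy_add_greedyOrbit (hβ : ∀ n, 0 ≤ β n) (hx : 0 ≤ x) (n : ℕ) :
    (greedy β x n : ℝ) + greedyOrbit β x (n + 1) = β n * greedyOrbit β x n := by
  have h := Int.floor_nonneg.2 (mul_nonneg (hβ n) (greedyOrbit_nonneg (β := β) hx n))
  rw [greedy_eq_floor, greedyOrbit_succ, ← Int.self_sub_floor, ← Int.cast_natCast,
    Int.toNat_of_nonneg h]
  ring

lemma greedy_eq_of_mul_eq_add {a : ℕ → ℕ} {y : ℕ → ℝ} (hy : ∀ n, y (n + 1) ∈ Set.Ico 0 1)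
    (hrec : ∀ n, β n * y n = a n + y (n + 1)) : greedy β (y 0) = a := by
  have hfloor : ∀ n, ⌊β n * y n⌋ = a n := fun n => by
    rw [hrec, Int.floor_natCast_add, Int.floor_eq_zero_iff.2 (hy n), add_zero]
  have horbit : ∀ n, greedyOrbit β (y 0) n = y n := by
    intro n
    induction n with
    | zero => rfl
    | succ n ih => rw [greedyOrbit_succ, ih, ← Int.self_sub_floor, hfloor, hrec]; simp
  funext n
  rw [greedy_eq_floor, horbit, hfloor, Int.toNat_natCast]

lemma shiftSeq_greedy (hβ : ∀ n, 0 ≤ β n) (hx : 0 ≤ x) (n : ℕ) :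
    shiftSeq (greedy β x) n = greedy (shiftBase β n) (greedyOrbit β x n) :=
  (greedy_eq_of_mul_eq_add (y := fun k => greedyOrbit β x (n + k))
    (fun k => greedyOrbit_succ_mem_Ico (n + k))
    (fun k => (greedy_add_greedyOrbit hβ hx (n + k)).symm)).symm

end Greedy

section Quasi

variable {β : ℕ → ℝ}

lemma quasiGreedy_eq_ceil (n : ℕ) :
    quasiGreedy β n = (⌈β n * quasiOrbit β n⌉ - 1).toNat := by
  cases n with
  | zero => simp [quasiGreedy, quasiOrbit]
  | succ n => rfl

lemma quasiOrbit_succ (n : ℕ) :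
    quasiOrbit β (n + 1) = β n * quasiOrbit β n - (⌈β n * quasiOrbit β n⌉ - 1) := by
  cases n with
  | zero => simp [quasiOrbit, qRem]
  | succ n => rfl

lemma quasiOrbit_mem_Ioc (n : ℕ) : quasiOrbit β n ∈ Set.Ioc 0 1 := by
  cases n with
  | zero => exact ⟨one_pos, le_rfl⟩
  | succ n =>
    rw [quasiOrbit_succ]
    constructor <;> linarith [Int.ceil_lt_add_one (β n * quasiOrbit β n),
      Int.le_ceil (β n * quasiOrbit β n)]

lemma quasiGreedy_add_quasiOrbit (hβ : ∀ n, 0 < β n) (n : ℕ) :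
    (quasiGreedy β n : ℝ) + quasiOrbit β (n + 1) = β n * quasiOrbit β n := by
  have h := Int.ceil_pos.2 (mul_pos (hβ n) (quasiOrbit_mem_Ioc (β := β) n).1)
  rw [quasiGreedy_eq_ceil, quasiOrbit_succ, ← Int.cast_natCast, Int.toNat_of_nonneg (by omega)]
  push_cast
  ring

lemma partialVal_quasiGreedy (hβ : ∀ n, 0 < β n) (N : ℕ) :
    partialVal β (quasiGreedy β) N = 1 - quasiOrbit β N / ∏ i ∈ range N, β i := by
  induction N with
  | zero => simp [partialVal, quasiOrbit]
  | succ N ih =>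
    have hq := quasiGreedy_add_quasiOrbit hβ N
    rw [partialVal, sum_range_succ, ← partialVal, ih, cprod, prod_range_succ]
    have hP : 0 < ∏ i ∈ range N, β i := prod_pos fun i _ => hβ i
    field_simp [(hβ N).ne', hP.ne']
    linear_combination hq

end Quasi

section Lex

lemma lexLt_of_ne_of_le {a b : ℕ → ℕ} (hne : a ≠ b)
    (hle : ∀ n, (∀ k < n, a k = b k) → a n ≤ b n) : LexLt a b := by
  have hex : ∃ n, a n ≠ b n := Function.ne_iff.1 hne
  have hpre : ∀ k < Nat.find hex, a k = b k := fun k hk => not_not.1 (Nat.find_min hex hk)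
  exact ⟨Nat.find hex, hpre, (hle _ hpre).lt_of_ne (Nat.find_spec hex)⟩

variable {β : ℕ → ℝ} {x : ℝ}

lemma greedyOrbit_sub_quasiOrbit (hβ : ∀ n, 0 < β n) (hx : 0 ≤ x) {n : ℕ}
    (h : ∀ k < n, greedy β x k = quasiGreedy β k) :
    greedyOrbit β x n - quasiOrbit β n = (∏ i ∈ range n, β i) * (x - 1) := by
  induction n with
  | zero => simp [greedyOrbit, quasiOrbit]
  | succ n ih =>
    have hg := greedy_add_greedyOrbit (fun n => (hβ n).le) hx n
    have hq := quasiGreedy_add_quasiOrbit hβ n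
    rw [h n n.lt_succ_self] at hg
    rw [prod_range_succ]
    linear_combination hg - hq + β n * ih fun k hk => h k (hk.trans n.lt_succ_self)

lemma greedy_le_quasiGreedy (hβ : ∀ n, 0 < β n) (hx : x ∈ Set.Ico 0 1) {n : ℕ}
    (h : ∀ k < n, greedy β x k = quasiGreedy β k) : greedy β x n ≤ quasiGreedy β n := by
  have hlt : greedyOrbit β x n < quasiOrbit β n := by
    have hdiff := greedyOrbit_sub_quasiOrbit hβ hx.1 h
    have hneg := mul_neg_of_pos_of_neg (prod_pos fun i (_ : i ∈ range n) => hβ i) (sub_neg.2 hx.2)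
    linarith
  have hfloor := Int.floor_lt_ceil_of_lt (mul_lt_mul_of_pos_left hlt (hβ n))
  rw [greedy_eq_floor, quasiGreedy_eq_ceil]
  exact Int.toNat_le_toNat (by omega)

lemma greedy_ne_quasiGreedy (hβ : IsCantorBase β) (hx : x ∈ Set.Ico 0 1) :
    greedy β x ≠ quasiGreedy β := by
  intro h
  obtain ⟨n, hn⟩ := (hβ.2.eventually_ge_atTop (2 / (1 - x))).exists
  have hdiff : greedyOrbit β x (n + 1) - quasiOrbit β (n + 1) = cprod β n * (x - 1) :=
    greedyOrbit_sub_quasiOrbit (fun n => one_pos.trans (hβ.1 n)) hx.1 fun k _ => congrFun h k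
  have hlarge : 2 ≤ cprod β n * (1 - x) := (div_le_iff₀ (sub_pos.2 hx.2)).1 hn
  linarith [greedyOrbit_nonneg (β := β) hx.1 (n + 1), (quasiOrbit_mem_Ioc (β := β) (n + 1)).2]

lemma greedy_lexLt_quasiGreedy (hβ : IsCantorBase β) (hx : x ∈ Set.Ico 0 1) :
    LexLt (greedy β x) (quasiGreedy β) :=
  lexLt_of_ne_of_le (greedy_ne_quasiGreedy hβ hx) fun _ =>
    greedy_le_quasiGreedy (fun n => one_pos.trans (hβ.1 n)) hx

end Lex

section Values

variable {β : ℕ → ℝ} {a : ℕ → ℕ}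

lemma partialVal_mono (hβ : ∀ n, 0 < β n) : Monotone (partialVal β a) :=
  monotone_nat_of_le_succ fun M => by
    rw [partialVal, partialVal, sum_range_succ]
    exact le_add_of_nonneg_right (div_nonneg (Nat.cast_nonneg _) (cprod_pos hβ M).le)

lemma partialVal_add (j M : ℕ) :
    partialVal β a (j + M) = partialVal β a j +
      (∏ i ∈ range j, β i)⁻¹ * partialVal (shiftBase β j) (shiftSeq a j) M := by
  rw [partialVal, sum_range_add, partialVal, partialVal, mul_sum]
  congr 1
  refine sum_congr rfl fun k _ => ?_
  rw [cprod_add, shiftSeq]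
  ring

/-- A digit strictly below the quasi-greedy one at index `ℓ` leaves room
`1 / (β_0 ⋯ β_ℓ)`, exactly the most a tail of partial value at most `1` can occupy. -/
lemma partialVal_succ_le (hβ : ∀ n, 0 < β n) {ℓ M : ℕ}
    (hpre : ∀ k < ℓ, a k = quasiGreedy β k) (hℓ : a ℓ < quasiGreedy β ℓ)
    (htail : partialVal (shiftBase β (ℓ + 1)) (shiftSeq a (ℓ + 1)) M ≤ 1) :
    partialVal β a (M + 1) ≤ 1 - quasiOrbit β (ℓ + 1) / ∏ i ∈ range (ℓ + 1), β i := by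
  set c := ∏ i ∈ range (ℓ + 1), β i
  have hc : 0 < c := prod_pos fun i _ => hβ i
  have hhead : partialVal β a (ℓ + 1) ≤ partialVal β (quasiGreedy β) (ℓ + 1) - c⁻¹ := by
    have hdigit : (a ℓ : ℝ) + 1 ≤ quasiGreedy β ℓ := by exact_mod_cast hℓ
    rw [partialVal, partialVal, sum_range_succ, sum_range_succ,
      sum_congr rfl fun k hk => by rw [hpre k (mem_range.1 hk)]]
    have hlast : (a ℓ : ℝ) / c + c⁻¹ ≤ quasiGreedy β ℓ / c := by
      rw [inv_eq_one_div, ← add_div]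
      gcongr
    rw [show cprod β ℓ = c from rfl]
    linarith
  calc partialVal β a (M + 1) ≤ partialVal β a (ℓ + 1 + M) := partialVal_mono hβ (by omega)
    _ = partialVal β a (ℓ + 1) +
        c⁻¹ * partialVal (shiftBase β (ℓ + 1)) (shiftSeq a (ℓ + 1)) M := partialVal_add _ _
    _ ≤ partialVal β (quasiGreedy β) (ℓ + 1) - c⁻¹ + c⁻¹ * 1 := by gcongr
    _ = 1 - quasiOrbit β (ℓ + 1) / c := by rw [partialVal_quasiGreedy hβ]; ring

lemma exists_partialVal_le_lt_one (hβ : ∀ n, 0 < β n)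
    (H : ∀ n, LexLt (shiftSeq a n) (quasiGreedy (shiftBase β n))) :
    ∃ B < 1, ∀ M, partialVal β a M ≤ B := by
  choose L hpre hlt using H
  set B : ℕ → ℝ := fun m =>
    1 - quasiOrbit (shiftBase β m) (L m + 1) / ∏ i ∈ range (L m + 1), shiftBase β m i
  have hB : ∀ m, B m < 1 := fun m =>
    sub_lt_self _ (div_pos (quasiOrbit_mem_Ioc _).1 (prod_pos fun i _ => hβ _))
  have hstep : ∀ m M,
      partialVal (shiftBase β (m + (L m + 1))) (shiftSeq a (m + (L m + 1))) M ≤ 1 →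
        partialVal (shiftBase β m) (shiftSeq a m) (M + 1) ≤ B m := fun m M htail =>
    partialVal_succ_le (β := shiftBase β m) (fun n => hβ _) (hpre m) (hlt m)
      (by rwa [shiftBase_shiftBase, shiftSeq_shiftSeq])
  have hle : ∀ M m, partialVal (shiftBase β m) (shiftSeq a m) M ≤ 1 := by
    intro M
    induction M with
    | zero => simp [partialVal]
    | succ M ih => exact fun m => (hstep m M (ih _)).trans (hB m).le
  refine ⟨B 0, hB 0, fun M => ?_⟩
  simpa using (partialVal_mono (fun n => hβ _) M.le_succ).trans (hstep 0 M (hle M _))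

lemma summable_and_valN_mem_Ico (hβ : ∀ n, 0 < β n)
    (H : ∀ n, LexLt (shiftSeq a n) (quasiGreedy (shiftBase β n))) :
    Summable (fun n => (a n : ℝ) / cprod β n) ∧ valN β a ∈ Set.Ico 0 1 := by
  obtain ⟨B, hB1, hB⟩ := exists_partialVal_le_lt_one hβ H
  have hnonneg : ∀ n, 0 ≤ (a n : ℝ) / cprod β n := fun n =>
    div_nonneg (Nat.cast_nonneg _) (cprod_pos hβ n).le
  have hs := summable_of_sum_range_le hnonneg hB
  exact ⟨hs, tsum_nonneg hnonneg, (hs.tsum_le_of_sum_range_le hB).trans_lt hB1⟩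

lemma mul_valN_eq (hβ : ∀ n, 0 < β n) (hs : Summable (fun n => (a n : ℝ) / cprod β n)) :
    β 0 * valN β a = a 0 + valN (shiftBase β 1) (shiftSeq a 1) := by
  have hterm : ∀ k, (a (k + 1) : ℝ) / cprod β (k + 1) =
      (β 0)⁻¹ * ((shiftSeq a 1 k : ℝ) / cprod (shiftBase β 1) k) := fun k => by
    rw [add_comm k 1, cprod_add, prod_range_one, shiftSeq]
    ring
  rw [valN, valB, hs.tsum_eq_zero_add, tsum_congr hterm, tsum_mul_left, cprod, prod_range_one]
  field_simp [(hβ 0).ne']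
  rfl

end Values

theorem stmt_13 (β : ℕ → ℝ) (hβ : IsCantorBase β) (a : ℕ → ℕ) :
    (∃ x ∈ Set.Ico (0:ℝ) 1, a = greedy β x) ↔
      ∀ n : ℕ, LexLt (shiftSeq a n) (quasiGreedy (shiftBase β n)) := by
  have hβ0 : ∀ n, 0 < β n := fun n => one_pos.trans (hβ.1 n)
  constructor
  · rintro ⟨x, hx, rfl⟩ n
    rw [shiftSeq_greedy (fun n => (hβ0 n).le) hx.1]
    exact greedy_lexLt_quasiGreedy (hβ.shift n) (greedyOrbit_mem_Ico hx n)
  · intro H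
    have hshift : ∀ m n, LexLt (shiftSeq (shiftSeq a m) n)
        (quasiGreedy (shiftBase (shiftBase β m) n)) := fun m n => by
      rw [shiftSeq_shiftSeq, shiftBase_shiftBase]
      exact H _
    set y : ℕ → ℝ := fun m => valN (shiftBase β m) (shiftSeq a m)
    have hy := fun m => summable_and_valN_mem_Ico (fun n => hβ0 (m + n)) (hshift m)
    have hrec : ∀ m, β m * y m = a m + y (m + 1) := fun m => by
      simp only [y]
      rw [← shiftBase_shiftBase, ← shiftSeq_shiftSeq]
      exact mul_valN_eq (fun n => hβ0 (m + n)) (hy m).1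
    exact ⟨y 0, (hy 0).2, (greedy_eq_of_mul_eq_add (fun m => (hy (m + 1)).2) hrec).symm⟩
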